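/- arXiv:1202.6352 — 4 statements merged into one kernel-verified Lean document; each statement's English description precedes it below -/
import Mathlib

section
/- Standard Skolemization for satisfiability fails in G△: (a) there exist a nonempty type D and a function f : D → [0,1] such that min(⨆ d, f d, ⨅ d, ¬△(f d)) = 1 (i.e., the formula ∃x p(x) ∧ ∀y ¬△p(y) is 1-satisfiable); but (b) for every nonempty type D, every f : D → [0,1] and every c ∈ D, min(f c, ⨅ d, ¬△(f d)) < 1 (i.e., its standard Skolemized form p(c) ∧ ∀y ¬△p(y) is not 1-satisfiable). -/
/-- The unit interval `[0,1]` is a complete lattice. -/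
instance : Fact ((0:ℝ) ≤ 1) := ⟨zero_le_one⟩

/-- Gödel implication on `[0,1]`. -/
noncomputable def gimp (a b : unitInterval) : unitInterval := if a ≤ b then 1 else b

/-- Gödel negation on `[0,1]`. -/
noncomputable def gneg (a : unitInterval) : unitInterval := gimp a 0

/-- The projection `△` on `[0,1]`. -/
noncomputable def gdelta (a : unitInterval) : unitInterval := if a = 1 then 1 else 0

/-!
`∃x p(x)` can take value 1 through a supremum that is not attained, e.g. `p` the identity on
`[0,1)`, while `∀y ¬△p(y)` only forbids the value 1 being attained. A Skolem constant `c` must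
attain it, and then `¬△p(c) = 0`.
-/

open Set

lemma gneg_gdelta_one : gneg (gdelta 1) = 0 := by
  simp [gneg, gdelta, gimp]

lemma gneg_gdelta_of_lt_one {a : unitInterval} (h : a < 1) : gneg (gdelta a) = 1 := by
  simp [gneg, gdelta, gimp, h.ne]

lemma min_self_gneg_gdelta_lt_one (a : unitInterval) : min a (gneg (gdelta a)) < 1 := by
  rcases (unitInterval.le_one' : a ≤ 1).lt_or_eq with h | rfl
  · exact min_lt_of_left_lt h
  · rw [gneg_gdelta_one, min_eq_right unitInterval.nonneg']
    exact zero_lt_one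

lemma iSup_Iio_one : ⨆ a : Iio (1 : unitInterval), (a : unitInterval) = 1 :=
  (Order.IsSuccPrelimit.of_dense 1).iSup_Iio

lemma iInf_gneg_gdelta_Iio_one : ⨅ a : Iio (1 : unitInterval), gneg (gdelta a) = 1 :=
  iInf_eq_top.2 fun a => gneg_gdelta_of_lt_one a.2

/-- `∃x p(x) ∧ ∀y ¬△p(y)` is 1-satisfiable, but its standard Skolemized
form `p(c) ∧ ∀y ¬△p(y)` is not. -/
theorem standard_sat_skolemization_fails :
    (∃ (D : Type) (_ : Nonempty D) (f : D → unitInterval),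
      min (⨆ d, f d) (⨅ d, gneg (gdelta (f d))) = 1) ∧
    (∀ (D : Type) [Nonempty D] (f : D → unitInterval) (c : D),
      min (f c) (⨅ d, gneg (gdelta (f d))) < 1) := by
  refine ⟨⟨Iio 1, ⟨⟨0, zero_lt_one⟩⟩, Subtype.val, ?_⟩, fun D _ f c => ?_⟩
  · rw [iSup_Iio_one, iInf_gneg_gdelta_Iio_one, min_self]
  · exact (min_le_min_left _ (iInf_le _ c)).trans_lt (min_self_gneg_gdelta_lt_one (f c))
end

section
/- Standard Skolemization for validity fails in (non-prenex) Gödel logic: (a) there exist a nonempty type D and a function f : D → [0,1] such that (⨅ d, ¬¬(f d)) ⇨ ¬¬(⨅ d, f d) < 1 (i.e., the formula ∀x ¬¬A(x) → ¬¬∀x A(x) is not valid); but (b) for every nonempty type D, every f : D → [0,1] and every c ∈ D, (⨅ d, ¬¬(f d)) ⇨ ¬¬(f c) = 1 (i.e., its standard Skolemized version ∀x ¬¬A(x) → ¬¬A(c) is valid). -/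
/-!
Double negation in Gödel logic is crisp: `¬¬a` is `1` for every positive `a`. Hence if `A` takes
only positive values whose infimum is `0` (e.g. `A` the identity on `(0,1]`), the antecedent
`∀x ¬¬A(x)` has value `1` while `¬¬∀x A(x)` has value `0`. The Skolemized formula, on the other
hand, is valid for any matrix, since `∀x B(x) → B(c)` is: an infimum lies below each of its terms.
-/

open unitInterval

theorem gimp_eq_one_iff {a b : unitInterval} : gimp a b = 1 ↔ a ≤ b := by
  unfold gimp
  split_ifs with hab
  · exact iff_of_true rfl hab
  · exact iff_of_false (ne_of_lt (lt_of_lt_of_le (not_le.1 hab) le_one')) hab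

theorem gimp_lt_one_of_lt {a b : unitInterval} (hba : b < a) : gimp a b < 1 :=
  lt_of_le_of_ne le_one' (mt gimp_eq_one_iff.1 (not_le.2 hba))

theorem gneg_gneg_of_ne_zero {a : unitInterval} (ha : a ≠ 0) : gneg (gneg a) = 1 := by
  have hneg : gneg a = 0 := if_neg fun h => ha (le_antisymm h nonneg')
  rw [gneg, hneg, gimp_eq_one_iff]

theorem gneg_gneg_zero : gneg (gneg 0) = 0 := by
  simp [gneg, gimp]

theorem gimp_iInf_apply_eq_one {D : Type*} (g : D → unitInterval) (c : D) :
    gimp (⨅ d, g d) (g c) = 1 :=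
  gimp_eq_one_iff.2 (iInf_le g c)

theorem gimp_iInf_gneg_gneg_lt_one {D : Type*} (f : D → unitInterval) (hf : ∀ d, f d ≠ 0)
    (hinf : ⨅ d, f d = 0) :
    gimp (⨅ d, gneg (gneg (f d))) (gneg (gneg (⨅ d, f d))) < 1 := by
  have hantecedent : ⨅ d, gneg (gneg (f d)) = 1 :=
    iInf_eq_top.2 fun d => gneg_gneg_of_ne_zero (hf d)
  rw [hantecedent, hinf, gneg_gneg_zero]
  exact gimp_lt_one_of_lt (zero_lt_one' unitInterval)

theorem iInf_bot_lt_coe {α : Type*} [CompleteLinearOrder α] [DenselyOrdered α] :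
    ⨅ x : {x : α // ⊥ < x}, (x : α) = ⊥ :=
  iInf_eq_bot.2 fun _ hb =>
    let ⟨x, hx0, hxb⟩ := exists_between hb
    ⟨⟨x, hx0⟩, hxb⟩

/-- `∀x ¬¬A(x) → ¬¬∀x A(x)` is not valid in Gödel logic, but its standard
Skolemized version `∀x ¬¬A(x) → ¬¬A(c)` is valid. -/
theorem standard_val_skolemization_fails_nonprenex :
    (∃ (D : Type) (_ : Nonempty D) (f : D → unitInterval),
      gimp (⨅ d, gneg (gneg (f d))) (gneg (gneg (⨅ d, f d))) < 1) ∧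
    (∀ (D : Type) [Nonempty D] (f : D → unitInterval) (c : D),
      gimp (⨅ d, gneg (gneg (f d))) (gneg (gneg (f c))) = 1) :=
  ⟨⟨{x : unitInterval // 0 < x}, ⟨⟨1, zero_lt_one' unitInterval⟩⟩, Subtype.val,
      gimp_iInf_gneg_gneg_lt_one _ (fun x => pos_iff_ne_zero.1 x.2) iInf_bot_lt_coe⟩,
    fun _ _ f c => gimp_iInf_apply_eq_one (fun d => gneg (gneg (f d))) c⟩
end

section
/- (a) For every nonempty type D and every f : D → [0,1], ⨆ x, ⨅ y, (△(f y) ⇨ f x) = 1 (i.e., the formula ∃x ∀y (△p(y) → p(x)) is valid in G△); and (b) there exist a nonempty type D and f : D → [0,1] such that ⨆ x, ⨅ y, (f y ⇨ f x) < 1 (i.e., removing the occurrence of △ results in a formula that is not valid in G△, although it is classically valid). -/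
/-!
With `△`, the premise `△p(y)` is either `0` or `1`, so the Gödel implication `△p(y) ⇨ p(x)`
is `1` as soon as `p(x) = 1` whenever `p(y) = 1`; a drinker-paradox witness `x` (one with
`p(x) = 1` if there is any) makes every instance equal to `1`. Without `△`, take `p` to be the
inclusion of `[0, c)` into `[0,1]` for some `0 < c < 1`: every `p(x)` is exceeded by some `p(y)`,
so `p(y) ⇨ p(x) = p(x)`, and the supremum is at most `c < 1`.
-/

open unitInterval

namespace Godel

variable {a b : I}

theorem gimp_of_le (h : a ≤ b) : gimp a b = 1 := if_pos h

theorem gimp_of_lt (h : b < a) : gimp a b = b := if_neg h.not_ge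

theorem gimp_gdelta_eq_one (h : a = 1 → b = 1) : gimp (gdelta a) b = 1 := by
  unfold gdelta
  split_ifs with ha
  · exact gimp_of_le (h ha).ge
  · exact gimp_of_le nonneg'

theorem iSup_iInf_gimp_gdelta_eq_one {D : Type*} [Nonempty D] (f : D → I) :
    ⨆ x, ⨅ y, gimp (gdelta (f y)) (f x) = 1 := by
  obtain ⟨x, hx⟩ : ∃ x, ∀ y, f y = 1 → f x = 1 := by
    by_cases h : ∃ y, f y = 1
    · obtain ⟨x, hx⟩ := h
      exact ⟨x, fun _ _ => hx⟩
    · exact ⟨Classical.arbitrary D, fun y hy => absurd ⟨y, hy⟩ h⟩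
  exact le_antisymm le_top <| le_iSup_of_le x <| le_iInf fun y => (gimp_gdelta_eq_one (hx y)).ge

theorem iSup_iInf_gimp_le_iSup {D : Type*} (f : D → I) (hf : ∀ x, ∃ y, f x < f y) :
    ⨆ x, ⨅ y, gimp (f y) (f x) ≤ ⨆ x, f x :=
  iSup_mono fun x =>
    let ⟨y, hy⟩ := hf x
    (iInf_le _ y).trans (gimp_of_lt hy).le

theorem iSup_iInf_gimp_Iio_lt_one {c : I} (hc : c < 1) :
    ⨆ x : Set.Iio c, ⨅ y : Set.Iio c, gimp (y : I) x < 1 :=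
  calc ⨆ x : Set.Iio c, ⨅ y : Set.Iio c, gimp (y : I) x
      ≤ ⨆ x : Set.Iio c, (x : I) := iSup_iInf_gimp_le_iSup _ fun x => exists_gt x
    _ ≤ c := iSup_le fun x => x.2.le
    _ < 1 := hc

end Godel

/-- `∃x ∀y (△p(y) → p(x))` is valid in G△, but removing the `△` yields a
formula that is not valid. -/
theorem delta_example_validity :
    (∀ (D : Type) [Nonempty D] (f : D → unitInterval),
      (⨆ x, ⨅ y, gimp (gdelta (f y)) (f x)) = 1) ∧
    (∃ (D : Type) (_ : Nonempty D) (f : D → unitInterval),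
      (⨆ x, ⨅ y, gimp (f y) (f x)) < 1) := by
  refine ⟨fun D _ f => Godel.iSup_iInf_gimp_gdelta_eq_one f, ?_⟩
  obtain ⟨c, hc0, hc1⟩ := exists_between (zero_lt_one' I)
  exact ⟨Set.Iio c, ⟨⟨0, hc0⟩⟩, Subtype.val, Godel.iSup_iInf_gimp_Iio_lt_one hc1⟩
end

section
/- Correctness of the order-clause translation of implication definitions: for all a, b, c in [0,1], c = (a ⇨ b) if and only if all of the following hold: (a ≤ b or c ≤ b), (c = 1 or b < a), (c = 1 or c ≤ b), and b ≤ c. (This verifies that the value of △(C ↔ (A → B)) equals 1 exactly when the four order clauses {A ≤ B, C ≤ B}, {⊤ ≤ C, B < A}, {⊤ ≤ C, C ≤ B}, {B ≤ C} are all satisfied by the truth values a, b, c of A, B, C.) -/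
theorem eq_ite_le_top_iff_order_clauses {α : Type*} [LinearOrder α] [OrderTop α] {a b c : α} :
    c = (if a ≤ b then ⊤ else b) ↔
      (a ≤ b ∨ c ≤ b) ∧ (c = ⊤ ∨ b < a) ∧ (c = ⊤ ∨ c ≤ b) ∧ b ≤ c := by
  rcases le_or_gt a b with hab | hba
  · rw [if_pos hab]
    constructor
    · rintro rfl
      exact ⟨Or.inl hab, Or.inl rfl, Or.inl rfl, le_top⟩
    · rintro ⟨-, hc | hba, -, -⟩
      · exact hc
      · exact absurd hab hba.not_ge
  · rw [if_neg hba.not_ge]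
    constructor
    · rintro rfl
      exact ⟨Or.inr le_rfl, Or.inr hba, Or.inr le_rfl, le_rfl⟩
    · rintro ⟨hab | hcb, -, -, hbc⟩
      · exact absurd hab hba.not_ge
      · exact le_antisymm hcb hbc

theorem gimp_eq_ite_top (a b : unitInterval) : gimp a b = if a ≤ b then ⊤ else b := rfl

/-- correctness of the order-clause translation of implication definitions. -/
theorem order_clauses_imp (a b c : unitInterval) :
    c = gimp a b ↔
      (a ≤ b ∨ c ≤ b) ∧ (c = 1 ∨ b < a) ∧ (c = 1 ∨ c ≤ b) ∧ b ≤ c := by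
  rw [gimp_eq_ite_top]
  exact eq_ite_le_top_iff_order_clauses
end
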